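/- Let k ∈ (-1,1), M > 0, and on ℝ⁴ with coordinates (x₁,y₁,x₂,y₂) set u² = x₂²+y₂², v² = x₁²+y₁², D = 1+(1+k)u²+(1-k)v². Define the symmetric bilinear form g by the matrix entries given in the generalized Taub-NUT coordinate expressions (e.g. M·g(∂_{x₁},∂_{x₁}) = 2(1+(1+k)u²)+2(1-k)x₁² + 2((k-1)y₁²(1+(1+k)u²)+y₁²(1+k)²u²)/D, etc.). Then g is smooth on all of ℝ⁴ and positive definite at the origin, where g = (2/M)·(Euclidean metric). -/

import Mathlib

/-- The generalized Taub-NUT metric in global Cartesian coordinates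
`(x₁,y₁,x₂,y₂)` on `ℝ⁴` (with `x₁ = v cos θ₁`, `y₁ = v sin θ₁`,
`x₂ = u cos θ₂`, `y₂ = u sin θ₂`), given as the matrix of the symmetric
bilinear form `g` in the basis `∂_{x₁}, ∂_{y₁}, ∂_{x₂}, ∂_{y₂}`. -/
noncomputable def gTN (k M : ℝ) (p : ℝ × ℝ × ℝ × ℝ) : Matrix (Fin 4) (Fin 4) ℝ :=
  let x₁ := p.1; let y₁ := p.2.1; let x₂ := p.2.2.1; let y₂ := p.2.2.2
  let u2 := x₂ ^ 2 + y₂ ^ 2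
  let v2 := x₁ ^ 2 + y₁ ^ 2
  let D := 1 + (1 + k) * u2 + (1 - k) * v2
  let C := 2 + (1 - k ^ 2) * (u2 + v2)
  let g11 := 2 * (1 + (1 + k) * u2) + 2 * (1 - k) * x₁ ^ 2 +
    2 * ((k - 1) * y₁ ^ 2 * (1 + (1 + k) * u2) + y₁ ^ 2 * (1 + k) ^ 2 * u2) / D
  let g12 := 2 * (1 - k) * x₁ * y₁ - 2 * (1 + k) ^ 2 * u2 * x₁ * y₁ / D +
    2 * (1 + (1 + k) * u2) * (1 - k) * x₁ * y₁ / D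
  let g22 := 2 * (1 + (1 + k) * u2) + 2 * (1 - k) * y₁ ^ 2 +
    2 * ((k - 1) * x₁ ^ 2 * (1 + (1 + k) * u2) + x₁ ^ 2 * (1 + k) ^ 2 * u2) / D
  let g13 := 2 * y₁ * y₂ * C / D
  let g14 := -2 * y₁ * x₂ * C / D
  let g23 := -2 * x₁ * y₂ * C / D
  let g24 := 2 * x₁ * x₂ * C / D
  let g33 := 2 * (1 + (1 - k) * v2) + 2 * (1 + k) * x₂ ^ 2 +
    2 * (-(k + 1) * y₂ ^ 2 * (1 + (1 - k) * v2) + y₂ ^ 2 * (1 - k) ^ 2 * v2) / D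
  let g34 := 2 * (1 + k) * x₂ * y₂ - 2 * (1 - k) ^ 2 * v2 * x₂ * y₂ / D +
    2 * (1 + (1 - k) * v2) * (1 + k) * x₂ * y₂ / D
  let g44 := 2 * (1 + (1 - k) * v2) + 2 * (1 + k) * y₂ ^ 2 +
    2 * (-(k + 1) * x₂ ^ 2 * (1 + (1 - k) * v2) + x₂ ^ 2 * (1 - k) ^ 2 * v2) / D
  (1 / M) • !![g11, g12, g13, g14;
               g12, g22, g23, g24;
               g13, g23, g33, g34;
               g14, g24, g34, g44]

/-- For `k ∈ (-1,1)` and `M > 0`, the generalized Taub-NUT metric `gTN k M`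
is smooth on all of `ℝ⁴` (entrywise) and at the origin equals `(2/M)` times the
Euclidean metric; in particular it is positive definite at the origin. -/
theorem stmt_19 (k M : ℝ) (hk : k ∈ Set.Ioo (-1 : ℝ) 1) (hM : 0 < M) :
    (∀ i j : Fin 4, ContDiff ℝ (⊤ : ℕ∞) fun p : ℝ × ℝ × ℝ × ℝ => gTN k M p i j) ∧
    gTN k M 0 = (2 / M) • (1 : Matrix (Fin 4) (Fin 4) ℝ) ∧
    (gTN k M 0).PosDef := by

  obtain ⟨hk1, hk2⟩ := hk
  have hD : ∀ p : ℝ × ℝ × ℝ × ℝ,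
      1 + (1 + k) * (p.2.2.1 ^ 2 + p.2.2.2 ^ 2) + (1 - k) * (p.1 ^ 2 + p.2.1 ^ 2) ≠ 0 := by
    intro p
    have h1 : (0:ℝ) < 1 + k := by linarith
    have h2 : (0:ℝ) < 1 - k := by linarith
    positivity
  refine ⟨?_, ?_, ?_⟩
  · intro i j
    fin_cases i <;> fin_cases j <;>
      simp only [gTN, Matrix.smul_apply, Matrix.of_apply, Matrix.cons_val', Matrix.cons_val_zero,
        Matrix.empty_val', Matrix.cons_val_fin_one, Matrix.cons_val_one, Matrix.head_cons,
        Matrix.head_fin_const, Matrix.cons_val_two, Matrix.tail_cons, Matrix.cons_val_three,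
        Fin.isValue, smul_eq_mul, Fin.mk_zero, Fin.mk_one,
        show (⟨2, by norm_num⟩ : Fin 4) = 2 from rfl, show (⟨3, by norm_num⟩ : Fin 4) = 3 from rfl] <;>
      fun_prop (disch := intros; exact hD _)
  · ext i j
    fin_cases i <;> fin_cases j <;>
      simp [gTN, Matrix.one_apply, Matrix.vecHead, Matrix.vecTail] <;> ring
  · have heq : gTN k M 0 = (2 / M) • (1 : Matrix (Fin 4) (Fin 4) ℝ) := by
      ext i j
      fin_cases i <;> fin_cases j <;>
        simp [gTN, Matrix.one_apply, Matrix.vecHead, Matrix.vecTail] <;> ring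
    rw [heq]
    have h1 := Matrix.PosDef.one (n := Fin 4) (R := ℝ)
    have hc : (0:ℝ) < 2 / M := by positivity
    refine ⟨?_, fun x hx => ?_⟩
    · unfold Matrix.IsHermitian
      simp
    · have hpos := h1.2 hx
      have h2 := mul_pos hc hpos
      rw [Finsupp.mul_sum] at h2
      refine lt_of_lt_of_eq h2 (Finsupp.sum_congr fun i _ => ?_)
      rw [Finsupp.mul_sum]
      refine Finsupp.sum_congr fun j _ => ?_
      simp only [Matrix.smul_apply, smul_eq_mul]
      ring
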